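/- Let δ > 0 and let B = B₀ + iB₁ be a complex symmetric n×n matrix with B₀, B₁ real and with both δB₀ − B₁ and δB₀ + B₁ positive definite. Let S = S₀ + iS₁ be a complex symmetric matrix (S₀, S₁ real) with S² = B and S₀ = Re S positive definite. Then: (i) |⟨S₁x,x⟩| ≤ 2nδ·⟨S₀x,x⟩ for every x ∈ ℝ^n; and (ii) there exist U ∈ SO(n,ℝ), a diagonal matrix Λ with positive diagonal entries, and a real n×n matrix K with |K_{ij}| ≤ 2δ for all i,j, such that S = U(I + iK)Λ Uᵀ. -/

import Mathlib

open scoped Matrix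

/-- The entrywise real part of a complex matrix. -/
def matRe {n : ℕ} (B : Matrix (Fin n) (Fin n) ℂ) : Matrix (Fin n) (Fin n) ℝ :=
  B.map Complex.re

/-- The entrywise imaginary part of a complex matrix. -/
def matIm {n : ℕ} (B : Matrix (Fin n) (Fin n) ℂ) : Matrix (Fin n) (Fin n) ℝ :=
  B.map Complex.im

/-!
Diagonalise `S₀ = U Λ Uᵀ` with `U ∈ SO(n)` and put `T = Uᵀ S₁ U`. Since `B = S²`, conjugation by `U`
turns `B₀, B₁` into `Λ² − T²` and `ΛT + TΛ`, so the hypothesis gives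
`|⟨(ΛT + TΛ)x, x⟩| ≤ δ⟨(Λ² − T²)x, x⟩` for real `x`. Polarising at `x = λⱼeᵢ ± λᵢeⱼ` and using
`(Λ² − T²)ᵢᵢ ≤ λᵢ²` yields `(λᵢ + λⱼ)|Tᵢⱼ| ≤ δλᵢλⱼ`, hence `|Tᵢⱼ| ≤ δ min(λᵢ, λⱼ)`. Then `K = TΛ⁻¹`
has entries bounded by `δ`, and summing `2|Tᵢⱼyᵢyⱼ| ≤ δ(λᵢyᵢ² + λⱼyⱼ²)` over `i, j` gives
`|⟨Ty, y⟩| ≤ nδ⟨Λy, y⟩`.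
-/

open Matrix

section Monoid

variable {M : Type*} [Monoid M] {v w : M}

lemma conj_mul_conj_of_mul_eq_one (h : w * v = 1) (a b : M) :
    v * a * w * (v * b * w) = v * (a * b) * w := by
  simp only [mul_assoc, ← mul_assoc w v, h, one_mul]

lemma conj_conj_of_mul_eq_one (h : w * v = 1) (a : M) : w * (v * a * w) * v = a := by
  simp only [mul_assoc, h, mul_one, ← mul_assoc w v, one_mul]

end Monoid

section RealMatrix

variable {ι : Type*} [Fintype ι]

/-- The real quadratic forms of `A + iM` lie in the sector `|Im z| ≤ δ Re z`. -/
def IsSectorial (δ : ℝ) (A M : Matrix ι ι ℝ) : Prop :=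
  ∀ x : ι → ℝ, |M *ᵥ x ⬝ᵥ x| ≤ δ * (A *ᵥ x ⬝ᵥ x)

lemma isSectorial_of_posSemidef {δ : ℝ} {A M : Matrix ι ι ℝ}
    (hsub : (δ • A - M).PosSemidef) (hadd : (δ • A + M).PosSemidef) : IsSectorial δ A M := by
  intro x
  have h₁ := hsub.dotProduct_mulVec_nonneg x
  have h₂ := hadd.dotProduct_mulVec_nonneg x
  simp only [star_trivial, dotProduct_comm x, sub_mulVec, add_mulVec, smul_mulVec, sub_dotProduct,
    add_dotProduct, smul_dotProduct, smul_eq_mul] at h₁ h₂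
  rw [abs_le]
  constructor <;> linarith

lemma dotProduct_transpose_mul_mul_mulVec (V M : Matrix ι ι ℝ) (x : ι → ℝ) :
    (Vᵀ * M * V) *ᵥ x ⬝ᵥ x = M *ᵥ (V *ᵥ x) ⬝ᵥ (V *ᵥ x) := by
  rw [← mulVec_mulVec, ← mulVec_mulVec, mulVec_transpose, ← dotProduct_mulVec]

namespace IsSectorial

variable {δ : ℝ} {A M : Matrix ι ι ℝ}

lemma transpose_mul_mul (h : IsSectorial δ A M) (V : Matrix ι ι ℝ) :
    IsSectorial δ (Vᵀ * A * V) (Vᵀ * M * V) := by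
  intro x
  simpa only [dotProduct_transpose_mul_mul_mulVec] using h (V *ᵥ x)

lemma of_conj_sq [DecidableEq ι] {U D T : Matrix ι ι ℝ} (hU : Uᵀ * U = 1)
    (h : IsSectorial δ (U * D * Uᵀ * (U * D * Uᵀ) - U * T * Uᵀ * (U * T * Uᵀ))
      (U * D * Uᵀ * (U * T * Uᵀ) + U * T * Uᵀ * (U * D * Uᵀ))) :
    IsSectorial δ (D * D - T * T) (D * T + T * D) := by
  rw [conj_mul_conj_of_mul_eq_one hU, conj_mul_conj_of_mul_eq_one hU,
    conj_mul_conj_of_mul_eq_one hU, conj_mul_conj_of_mul_eq_one hU, ← sub_mul, ← mul_sub,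
    ← add_mul, ← mul_add] at h
  simpa only [conj_conj_of_mul_eq_one hU] using h.transpose_mul_mul U

lemma two_mul_abs_dotProduct_le (h : IsSectorial δ A M) (hM : Mᵀ = M) (u v : ι → ℝ) :
    2 * |M *ᵥ u ⬝ᵥ v| ≤ δ * (A *ᵥ u ⬝ᵥ u + A *ᵥ v ⬝ᵥ v) := by
  have hsymm : M *ᵥ v ⬝ᵥ u = M *ᵥ u ⬝ᵥ v := by
    rw [dotProduct_comm, dotProduct_mulVec, ← mulVec_transpose, hM]
  have hplus := abs_le.mp (h (u + v))
  have hminus := abs_le.mp (h (u - v))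
  simp only [mulVec_add, mulVec_sub, add_dotProduct, sub_dotProduct, dotProduct_add,
    dotProduct_sub, hsymm, mul_add, mul_sub] at hplus hminus
  rw [mul_add, ← abs_two, ← abs_mul, abs_le]
  constructor <;> linarith [hplus.1, hplus.2, hminus.1, hminus.2]

lemma abs_apply_le [DecidableEq ι] (h : IsSectorial δ A M) (hδ : 0 ≤ δ) (hM : Mᵀ = M)
    {μ : ι → ℝ} (hμ : ∀ i, 0 < μ i) (hA : ∀ i, A i i ≤ μ i ^ 2) (i j : ι) :
    |M i j| ≤ δ * (μ i * μ j) := by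
  have hμi := hμ i
  have hμj := hμ j
  have hji : M j i = M i j := by rw [← transpose_apply M i j, hM]
  have hpol := h.two_mul_abs_dotProduct_le hM (μ j • Pi.single i 1) (μ i • Pi.single j 1)
  simp only [mulVec_smul, mulVec_single_one, dotProduct_smul, dotProduct_single, Pi.smul_apply,
    col_apply, smul_eq_mul, mul_one, hji, abs_mul, abs_of_pos hμi, abs_of_pos hμj] at hpol
  have hdiag :
      δ * (μ j * (μ j * A i i) + μ i * (μ i * A j j)) ≤ 2 * (μ i * μ j) * (δ * (μ i * μ j)) := by
    have := hA i
    have := hA j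
    nlinarith [mul_nonneg hδ (sq_nonneg (μ j)), mul_nonneg hδ (sq_nonneg (μ i))]
  refine le_of_mul_le_mul_left ?_ (by positivity : 0 < 2 * (μ i * μ j))
  linarith

end IsSectorial

section DecidableEq

variable [DecidableEq ι]

theorem Matrix.IsHermitian.exists_specialOrthogonal_eq_mul_diagonal_mul_transpose
    {A : Matrix ι ι ℝ} (hA : A.IsHermitian) :
    ∃ U : Matrix ι ι ℝ, Uᵀ * U = 1 ∧ U.det = 1 ∧ A = U * diagonal hA.eigenvalues * Uᵀ := by
  rcases isEmpty_or_nonempty ι with hι | ⟨⟨i₀⟩⟩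
  · exact ⟨1, Subsingleton.elim _ _, det_isEmpty, Subsingleton.elim _ _⟩
  set V : Matrix ι ι ℝ := (hA.eigenvectorUnitary : Matrix ι ι ℝ)
  have hVV : Vᵀ * V = 1 := by
    simpa [star_eq_conjTranspose] using Unitary.coe_star_mul_self hA.eigenvectorUnitary
  have hdetV : V.det * V.det = 1 := by
    simpa [det_mul, det_transpose] using congrArg det hVV
  -- rescaling one eigenvector by `det V = ±1` makes the determinant `1`
  set d : ι → ℝ := Function.update 1 i₀ V.det
  have hdd : ∀ j, d j * d j = 1 := by
    intro j
    rcases eq_or_ne j i₀ with rfl | hj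
    · simpa [d] using hdetV
    · simp [d, hj]
  have hWW : diagonal d * diagonal d = 1 := by
    rw [diagonal_mul_diagonal, ← diagonal_one]; exact congrArg diagonal (funext hdd)
  refine ⟨V * diagonal d, ?_, ?_, ?_⟩
  · rw [transpose_mul, diagonal_transpose, Matrix.mul_assoc, ← Matrix.mul_assoc Vᵀ, hVV,
      Matrix.one_mul, hWW]
  · rw [det_mul, det_diagonal, Finset.prod_update_of_mem (Finset.mem_univ _)]
    simpa using hdetV
  · have hspec : A = V * diagonal hA.eigenvalues * Vᵀ := by
      simpa [star_eq_conjTranspose] using hA.spectral_theorem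
    have hcomm : diagonal d * diagonal hA.eigenvalues = diagonal hA.eigenvalues * diagonal d := by
      simp only [diagonal_mul_diagonal, mul_comm]
    refine hspec.trans ?_
    rw [transpose_mul, diagonal_transpose]
    simp only [Matrix.mul_assoc]
    rw [← Matrix.mul_assoc (diagonal d), hcomm, Matrix.mul_assoc, ← Matrix.mul_assoc (diagonal d),
      hWW, Matrix.one_mul]

lemma diagonal_mul_add_mul_diagonal_apply {R : Type*} [CommSemiring R] (μ : ι → R)
    (T : Matrix ι ι R) (i j : ι) :
    (diagonal μ * T + T * diagonal μ) i j = (μ i + μ j) * T i j := by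
  rw [Matrix.add_apply, diagonal_mul, mul_diagonal]
  ring

lemma diagonal_mul_diagonal_sub_mul_self_apply_le (μ : ι → ℝ) {T : Matrix ι ι ℝ} (hT : Tᵀ = T)
    (i : ι) : (diagonal μ * diagonal μ - T * T) i i ≤ μ i ^ 2 := by
  have hTT : 0 ≤ (T * T) i i := by
    simpa [hT] using (posSemidef_conjTranspose_mul_self T).diag_nonneg (i := i)
  rw [Matrix.sub_apply, diagonal_mul_diagonal, diagonal_apply_eq, sq]
  linarith

lemma abs_dotProduct_mulVec_le_card_mul {T : Matrix ι ι ℝ} {μ : ι → ℝ} {c : ℝ}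
    (hrow : ∀ i j, |T i j| ≤ c * μ i) (hcol : ∀ i j, |T i j| ≤ c * μ j) (y : ι → ℝ) :
    |T *ᵥ y ⬝ᵥ y| ≤ Fintype.card ι * c * (diagonal μ *ᵥ y ⬝ᵥ y) := by
  have hterm : ∀ i j, |T i j * y j * y i| ≤ c / 2 * (μ i * y i ^ 2) + c / 2 * (μ j * y j ^ 2) := by
    intro i j
    have hy : 2 * (|y i| * |y j|) ≤ y i ^ 2 + y j ^ 2 := by
      nlinarith [sq_nonneg (|y i| - |y j|), sq_abs (y i), sq_abs (y j)]
    rw [abs_mul, abs_mul]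
    nlinarith [abs_nonneg (T i j), mul_le_mul_of_nonneg_right (hrow i j) (sq_nonneg (y i)),
      mul_le_mul_of_nonneg_right (hcol i j) (sq_nonneg (y j))]
  have hsum : T *ᵥ y ⬝ᵥ y = ∑ i, ∑ j, T i j * y j * y i := by
    simp only [dotProduct, mulVec, Finset.sum_mul]
  have hdiag : diagonal μ *ᵥ y ⬝ᵥ y = ∑ i, μ i * y i ^ 2 := by
    simp only [dotProduct, mulVec_diagonal, sq, mul_assoc]
  calc |T *ᵥ y ⬝ᵥ y| ≤ ∑ i, ∑ j, |T i j * y j * y i| := by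
        rw [hsum]
        exact (Finset.abs_sum_le_sum_abs _ _).trans
          (Finset.sum_le_sum fun i _ => Finset.abs_sum_le_sum_abs _ _)
    _ ≤ ∑ i, ∑ j, (c / 2 * (μ i * y i ^ 2) + c / 2 * (μ j * y j ^ 2)) :=
        Finset.sum_le_sum fun i _ => Finset.sum_le_sum fun j _ => hterm i j
    _ = Fintype.card ι * c * (diagonal μ *ᵥ y ⬝ᵥ y) := by
        simp only [Finset.sum_add_distrib, Finset.sum_const, Finset.card_univ, nsmul_eq_mul,
          ← Finset.mul_sum, hdiag]
        ring

lemma exists_mul_diagonal_eq_of_abs_le {T : Matrix ι ι ℝ} {μ : ι → ℝ} (hμ : ∀ j, 0 < μ j)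
    {c : ℝ} (hT : ∀ i j, |T i j| ≤ c * μ j) :
    ∃ K : Matrix ι ι ℝ, (∀ i j, |K i j| ≤ c) ∧ K * diagonal μ = T := by
  refine ⟨of fun i j => T i j / μ j, fun i j => ?_, ?_⟩
  · rw [of_apply, abs_div, abs_of_pos (hμ j), div_le_iff₀ (hμ j)]
    exact hT i j
  · ext i j
    rw [mul_diagonal, of_apply, div_mul_cancel₀ _ (hμ j).ne']

lemma IsSectorial.abs_apply_le_mul_right {δ : ℝ} {μ : ι → ℝ} {T : Matrix ι ι ℝ}
    (h : IsSectorial δ (diagonal μ * diagonal μ - T * T) (diagonal μ * T + T * diagonal μ))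
    (hδ : 0 ≤ δ) (hμ : ∀ i, 0 < μ i) (hT : Tᵀ = T) (i j : ι) : |T i j| ≤ δ * μ j := by
  have hsymm : (diagonal μ * T + T * diagonal μ)ᵀ = diagonal μ * T + T * diagonal μ := by
    rw [transpose_add, transpose_mul, transpose_mul, hT, diagonal_transpose, add_comm]
  have hμij : 0 < μ i + μ j := add_pos (hμ i) (hμ j)
  have hentry := h.abs_apply_le hδ hsymm hμ (diagonal_mul_diagonal_sub_mul_self_apply_le μ hT) i j
  rw [diagonal_mul_add_mul_diagonal_apply, abs_mul, abs_of_pos hμij] at hentry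
  refine le_of_mul_le_mul_left (hentry.trans ?_) hμij
  nlinarith [mul_nonneg hδ (sq_nonneg (μ j))]

end DecidableEq

end RealMatrix

lemma matRe_mul {n : ℕ} (S T : Matrix (Fin n) (Fin n) ℂ) :
    matRe (S * T) = matRe S * matRe T - matIm S * matIm T := by
  ext i j
  simp [matRe, matIm, Matrix.mul_apply, Complex.re_sum, Complex.mul_re, Finset.sum_sub_distrib]

lemma matIm_mul {n : ℕ} (S T : Matrix (Fin n) (Fin n) ℂ) :
    matIm (S * T) = matRe S * matIm T + matIm S * matRe T := by
  ext i j
  simp [matRe, matIm, Matrix.mul_apply, Complex.im_sum, Complex.mul_im, Finset.sum_add_distrib]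

lemma ofReal_map_mul {ι : Type*} [Fintype ι] (A C : Matrix ι ι ℝ) :
    (A * C).map Complex.ofReal = A.map Complex.ofReal * C.map Complex.ofReal :=
  Matrix.map_mul (f := Complex.ofRealHom)

lemma matRe_map_add_I_smul_matIm_map {n : ℕ} (S : Matrix (Fin n) (Fin n) ℂ) :
    (matRe S).map Complex.ofReal + Complex.I • (matIm S).map Complex.ofReal = S := by
  ext i j
  simp [matRe, matIm, Complex.ext_iff]

lemma eq_conj_of_matRe_of_matIm {n : ℕ} {S : Matrix (Fin n) (Fin n) ℂ}
    {U K D : Matrix (Fin n) (Fin n) ℝ} (h₀ : matRe S = U * D * Uᵀ)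
    (h₁ : matIm S = U * (K * D) * Uᵀ) :
    S = U.map Complex.ofReal * (1 + Complex.I • K.map Complex.ofReal) *
      D.map Complex.ofReal * (U.map Complex.ofReal)ᵀ := by
  rw [← matRe_map_add_I_smul_matIm_map S, h₀, h₁]
  simp only [ofReal_map_mul, ← transpose_map, Matrix.mul_add, Matrix.add_mul, Matrix.mul_one,
    Matrix.mul_smul, Matrix.smul_mul, Matrix.mul_assoc]

lemma matIm_transpose {n : ℕ} (S : Matrix (Fin n) (Fin n) ℂ) : matIm Sᵀ = (matIm S)ᵀ := rfl

theorem stmt_12_general {n : ℕ} (δ : ℝ) (hδ0 : 0 < δ)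
    (B : Matrix (Fin n) (Fin n) ℂ)
    (h1 : (δ • matRe B - matIm B).PosDef) (h2 : (δ • matRe B + matIm B).PosDef)
    (S : Matrix (Fin n) (Fin n) ℂ) (hS : Sᵀ = S) (hSB : S * S = B)
    (hS0 : (matRe S).PosDef) :
    (∀ x : Fin n → ℝ,
      |(matIm S).mulVec x ⬝ᵥ x| ≤ 2 * n * δ * ((matRe S).mulVec x ⬝ᵥ x)) ∧
    ∃ (U : Matrix (Fin n) (Fin n) ℝ) (lam : Fin n → ℝ) (K : Matrix (Fin n) (Fin n) ℝ),
      Uᵀ * U = 1 ∧ U.det = 1 ∧ (∀ j, 0 < lam j) ∧ (∀ i j, |K i j| ≤ 2 * δ) ∧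
      S = U.map Complex.ofReal * (1 + Complex.I • K.map Complex.ofReal) *
          (Matrix.diagonal lam).map Complex.ofReal * (U.map Complex.ofReal)ᵀ := by
  obtain ⟨U, hUU, hUdet, hS₀⟩ :=
    hS0.isHermitian.exists_specialOrthogonal_eq_mul_diagonal_mul_transpose
  set μ := hS0.isHermitian.eigenvalues
  have hμ : ∀ i, 0 < μ i := hS0.eigenvalues_pos
  set T := Uᵀ * matIm S * U
  have hS₁ : matIm S = U * T * Uᵀ := (conj_conj_of_mul_eq_one (mul_eq_one_comm.mp hUU) _).symm
  have hT : Tᵀ = T := by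
    simp only [T, transpose_mul, transpose_transpose, ← matIm_transpose, hS, Matrix.mul_assoc]
  have hsect :
      IsSectorial δ (diagonal μ * diagonal μ - T * T) (diagonal μ * T + T * diagonal μ) := by
    have hB : IsSectorial δ (matRe B) (matIm B) :=
      isSectorial_of_posSemidef h1.posSemidef h2.posSemidef
    rw [← hSB, matRe_mul, matIm_mul, hS₀, hS₁] at hB
    exact hB.of_conj_sq hUU
  have hTcol : ∀ i j, |T i j| ≤ δ * μ j := hsect.abs_apply_le_mul_right hδ0.le hμ hT
  have hTrow : ∀ i j, |T i j| ≤ δ * μ i := fun i j => by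
    rw [← transpose_apply T j i, hT]; exact hTcol j i
  obtain ⟨K, hK, hKΛ⟩ := exists_mul_diagonal_eq_of_abs_le hμ hTcol
  refine ⟨fun x => ?_, U, μ, K, hUU, hUdet, hμ, fun i j => (hK i j).trans (by linarith),
    eq_conj_of_matRe_of_matIm hS₀ (hKΛ ▸ hS₁)⟩
  have hquad := abs_dotProduct_mulVec_le_card_mul hTrow hTcol (Uᵀ *ᵥ x)
  rw [← dotProduct_transpose_mul_mul_mulVec, ← dotProduct_transpose_mul_mul_mulVec,
    transpose_transpose, ← hS₀, ← hS₁, Fintype.card_fin] at hquad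
  have hpos := hS0.posSemidef.dotProduct_mulVec_nonneg x
  rw [star_trivial, dotProduct_comm] at hpos
  have hnδ : 0 ≤ (n : ℝ) * δ := by positivity
  exact hquad.trans (mul_le_mul_of_nonneg_right (by linarith) hpos)

/-- Let `δ > 0` and let `B` be a complex symmetric `n×n` matrix whose real and
imaginary parts `B₀, B₁` satisfy: `δB₀ − B₁` and `δB₀ + B₁` are positive definite.  Let
`S = S₀ + iS₁` be complex symmetric with `S² = B` and `S₀ = Re S` positive definite.  Then:
(i) `|⟨S₁x,x⟩| ≤ 2nδ·⟨S₀x,x⟩` for every `x ∈ ℝ^n`; and (ii) `S = U(I + iK)Λ Uᵀ` for some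
`U ∈ SO(n,ℝ)`, some diagonal `Λ` with positive diagonal entries, and some real `K` with
`|K_{ij}| ≤ 2δ`. -/
theorem stmt_12 {n : ℕ} (δ : ℝ) (hδ0 : 0 < δ)
    (B : Matrix (Fin n) (Fin n) ℂ) (hB : Bᵀ = B)
    (h1 : (δ • matRe B - matIm B).PosDef) (h2 : (δ • matRe B + matIm B).PosDef)
    (S : Matrix (Fin n) (Fin n) ℂ) (hS : Sᵀ = S) (hSB : S * S = B)
    (hS0 : (matRe S).PosDef) :
    (∀ x : Fin n → ℝ,
      |(matIm S).mulVec x ⬝ᵥ x| ≤ 2 * n * δ * ((matRe S).mulVec x ⬝ᵥ x)) ∧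
    ∃ (U : Matrix (Fin n) (Fin n) ℝ) (lam : Fin n → ℝ) (K : Matrix (Fin n) (Fin n) ℝ),
      Uᵀ * U = 1 ∧ U.det = 1 ∧ (∀ j, 0 < lam j) ∧ (∀ i j, |K i j| ≤ 2 * δ) ∧
      S = U.map Complex.ofReal * (1 + Complex.I • K.map Complex.ofReal) *
          (Matrix.diagonal lam).map Complex.ofReal * (U.map Complex.ofReal)ᵀ :=
  stmt_12_general δ hδ0 B h1 h2 S hS hSB hS0
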